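/- arXiv:0908.1640 — 4 statements merged into one kernel-verified Lean document; each statement's English description precedes it below -/
import Mathlib

section
/- Let K act on an abelian group A by automorphisms, G = K ⋉ A, and γ = (β,α) : R → G a cocycle. Define R(β) := {((x,k),(x', k·β(x,x'))) : (x,x') ∈ R, k ∈ K} and α̃((x,k),(x', k·β(x,x'))) := k·α(x,x'). Then α̃ is a cocycle of R(β), i.e., α̃(p,q) + α̃(q,r) = α̃(p,r) for all (p,q),(q,r) ∈ R(β). -/
/-- The lifted relation `R(β)` on `X × K`. -/
def RBeta {X K : Type*} [Group K] (R : X → X → Prop) (β : X → X → K)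
    (p q : X × K) : Prop :=
  R p.1 q.1 ∧ q.2 = p.2 * β p.1 q.1

/-- The lifted map `α̃ ((x,k), (x',k β(x,x'))) = k • α (x, x')`. -/
def alphaTilde {X K A : Type*} [Group K] [AddCommGroup A]
    [DistribMulAction K A] (α : X → X → A) (p q : X × K) : A :=
  p.2 • α p.1 q.1

/-- If `γ = (β, α)` is a `K ⋉ A`-valued cocycle of `R`, then `α̃` is an
`A`-valued cocycle of `R(β)`. -/
theorem alphaTilde_cocycle {X K A : Type*} [Group K] [AddCommGroup A]
    [DistribMulAction K A]
    (R : X → X → Prop) (hR : Equivalence R)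
    (β : X → X → K) (α : X → X → A)
    (hβ : ∀ x y z, R x y → R y z → β x y * β y z = β x z)
    (hα : ∀ x y z, R x y → R y z → α x y + β x y • α y z = α x z) :
    ∀ p q r : X × K, RBeta R β p q → RBeta R β q r →
      alphaTilde α p q + alphaTilde α q r = alphaTilde α p r := by
  rintro ⟨x, k⟩ ⟨y, k'⟩ ⟨z, k''⟩ ⟨hxy, hk'⟩ ⟨hyz, hk''⟩
  simp only at hk' hxy hyz
  subst hk'
  simp only [alphaTilde, mul_smul]
  rw [← smul_add, hα x y z hxy hyz]
end

section
/- For every finite set P of positive integers, there exist a finite abelian group B, a subgroup D of B, and an automorphism θ of B such that P = { card({θ^n(d) : n ∈ ℤ} ∩ D) : d ∈ D, d ≠ 0 }, i.e., the set of cardinalities of intersections of θ-orbits of nonzero elements of D with D equals P. -/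
/-- A witness for the generalized Algebraic Lemma (finite case): a finite
abelian group `B`, a subgroup `D` and an automorphism `θ` such that the set
of cardinalities of intersections of `θ`-orbits of nonzero elements of `D`
with `D` equals `P`. -/
structure AlgLemmaWitness (P : Finset ℕ) where
  B : Type
  [grp : AddCommGroup B]
  [fin : Fintype B]
  D : AddSubgroup B
  θ : AddAut B
  spec : {n : ℕ | ∃ d ∈ D, d ≠ 0 ∧
      ((Set.range fun k : ℤ => (k • θ) d) ∩ (D : Set B)).ncard = n} = ↑P

/-!
Realize the elements of `P` one at a time. Suppose `(B, D, θ)` realizes `P`, and let `M` be the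
order of `θ`. For a new value `n`, choose a prime `p ≡ 1 [MOD n]` and a unit `u` of order `n` in
`ZMod p`, and put `R = 𝔽_p[X] / (X ^ M - u)`, `E = 𝔽_p ⊆ R`, and let `φ` be multiplication by the
root `ξ = X`. A power `ξ ^ k` maps `E` into itself exactly when `M ∣ k`, and `ξ ^ (M * j) = u ^ j`.
Hence in `(B × R, D × E, θ × φ)` the orbit trace of `(d, c)` is the orbit trace of `d` when `c = 0`.
When `c ≠ 0`, the `R`-coordinate forces `M ∣ k`, which freezes the `B`-coordinate (`θ ^ M = 1`),
and what remains is `{u ^ j * c}`, of size `n`.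
-/

open Polynomial

attribute [instance] AlgLemmaWitness.grp AlgLemmaWitness.fin

theorem IsCyclic.exists_orderOf_eq_of_dvd {G : Type*} [Group G] [IsCyclic G] [Finite G] {n : ℕ}
    (hn : n ∣ Nat.card G) : ∃ g : G, orderOf g = n := by
  obtain ⟨g, hg⟩ := IsCyclic.exists_ofOrder_eq_natCard (α := G)
  exact ⟨g ^ (orderOf g / n), orderOf_pow_orderOf_div (hg ▸ Nat.card_pos.ne') (hg ▸ hn)⟩

theorem AdjoinRoot.root_pow_notMem_range_algebraMap {R : Type*} [CommRing R] [Nontrivial R]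
    {f : R[X]} (hf : f.Monic) {s : ℕ} (hs0 : s ≠ 0) (hs : s < f.natDegree) :
    root f ^ s ∉ Set.range (algebraMap R (AdjoinRoot f)) := by
  rintro ⟨a, ha⟩
  refine mk_ne_zero_of_natDegree_lt hf (X_pow_sub_C_ne_zero (Nat.pos_of_ne_zero hs0) a)
    (by rwa [natDegree_X_pow_sub_C]) ?_
  rw [map_sub, map_pow, mk_X, mk_C, ← ha, algebraMap_eq, sub_self]

namespace AddAut

variable {B R : Type*} [AddCommGroup B] [AddCommGroup R]

theorem zsmul_mulLeft_apply {S : Type*} [Ring S] (x : Sˣ) (k : ℤ) (c : S) :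
    (k • Multiplicative.toAdd (mulLeft x)) c = ((x ^ k : Sˣ) : S) * c := by
  rw [← toAdd_zpow, ← map_zpow]
  rfl

def prodCongr (θ : AddAut B) (φ : AddAut R) : AddAut (B × R) :=
  AddEquiv.prodCongr θ φ

variable (B R) in
def prodCongrHom : AddAut B × AddAut R →+ AddAut (B × R) where
  toFun e := e.1.prodCongr e.2
  map_zero' := rfl
  map_add' _ _ := rfl

theorem zsmul_prodCongr_apply (θ : AddAut B) (φ : AddAut R) (k : ℤ) (x : B × R) :
    (k • θ.prodCongr φ) x = ((k • θ) x.1, (k • φ) x.2) := by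
  change (k • prodCongrHom B R (θ, φ)) x = _
  rw [← map_zsmul, Prod.smul_mk]
  rfl

def orbitTrace (θ : AddAut B) (D : AddSubgroup B) (d : B) : Set B :=
  Set.range (fun k : ℤ => (k • θ) d) ∩ D

def traceCards (θ : AddAut B) (D : AddSubgroup B) : Set ℕ :=
  {n | ∃ d ∈ D, d ≠ 0 ∧ (θ.orbitTrace D d).ncard = n}

variable {θ : AddAut B} {D : AddSubgroup B} {φ : AddAut R} {E : AddSubgroup R}

theorem orbitTrace_prodCongr_mk_zero (d : B) :
    (θ.prodCongr φ).orbitTrace (D.prod E) (d, 0) = (·, (0 : R)) '' θ.orbitTrace D d := by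
  ext ⟨x, y⟩
  simp only [orbitTrace, zsmul_prodCongr_apply, map_zero, Set.mem_inter_iff, Set.mem_range,
    SetLike.mem_coe, AddSubgroup.mem_prod, Set.mem_image, Prod.mk.injEq]
  constructor
  · rintro ⟨⟨k, rfl, rfl⟩, hk, -⟩
    exact ⟨_, ⟨⟨k, rfl⟩, hk⟩, rfl, rfl⟩
  · rintro ⟨_, ⟨⟨k, rfl⟩, hk⟩, rfl, rfl⟩
    exact ⟨⟨k, rfl, rfl⟩, hk, E.zero_mem⟩

theorem orbitTrace_prodCongr_mk_of_mem {M : ℕ} (hθ : M • θ = 0) {d : B} {c : R} (hd : d ∈ D)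
    (hdvd : ∀ k : ℤ, (k • φ) c ∈ E → (M : ℤ) ∣ k) :
    (θ.prodCongr φ).orbitTrace (D.prod E) (d, c) = (d, ·) '' φ.orbitTrace E c := by
  have hfix : ∀ k : ℤ, (k • φ) c ∈ E → (k • θ) d = d := by
    rintro k hk
    obtain ⟨j, rfl⟩ := hdvd k hk
    rw [mul_comm, mul_zsmul, natCast_zsmul, hθ, zsmul_zero, zero_apply]
  ext ⟨x, y⟩
  simp only [orbitTrace, zsmul_prodCongr_apply, Set.mem_inter_iff, Set.mem_range,
    SetLike.mem_coe, AddSubgroup.mem_prod, Set.mem_image, Prod.mk.injEq]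
  constructor
  · rintro ⟨⟨k, rfl, rfl⟩, -, hk⟩
    exact ⟨_, ⟨⟨k, rfl⟩, hk⟩, (hfix k hk).symm, rfl⟩
  · rintro ⟨_, ⟨⟨k, rfl⟩, hk⟩, rfl, rfl⟩
    exact ⟨⟨k, hfix k hk, rfl⟩, hd, hk⟩

theorem traceCards_prodCongr {M n : ℕ} (hθ : M • θ = 0) (hE : E ≠ ⊥)
    (hdvd : ∀ c ∈ E, c ≠ 0 → ∀ k : ℤ, (k • φ) c ∈ E → (M : ℤ) ∣ k)
    (hcard : ∀ c ∈ E, c ≠ 0 → (φ.orbitTrace E c).ncard = n) :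
    (θ.prodCongr φ).traceCards (D.prod E) = insert n (θ.traceCards D) := by
  have card_mk_of_ne_zero : ∀ d ∈ D, ∀ c ∈ E, c ≠ 0 →
      ((θ.prodCongr φ).orbitTrace (D.prod E) (d, c)).ncard = n := fun d hd c hc hc0 => by
    rw [orbitTrace_prodCongr_mk_of_mem hθ hd (hdvd c hc hc0),
      Set.ncard_image_of_injective _ (Prod.mk_right_injective d), hcard c hc hc0]
  have card_mk_zero : ∀ d : B,
      ((θ.prodCongr φ).orbitTrace (D.prod E) (d, 0)).ncard = (θ.orbitTrace D d).ncard :=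
    fun d => by
      rw [orbitTrace_prodCongr_mk_zero, Set.ncard_image_of_injective _ (Prod.mk_left_injective 0)]
  ext m
  simp only [traceCards, Set.mem_insert_iff, Set.mem_ofPred_eq, AddSubgroup.mem_prod,
    Prod.exists, ne_eq, Prod.mk_eq_zero, not_and]
  constructor
  · rintro ⟨d, c, ⟨hd, hc⟩, hdc, rfl⟩
    by_cases hc0 : c = 0
    · subst hc0
      exact Or.inr ⟨d, hd, fun h => hdc h rfl, (card_mk_zero d).symm⟩
    · exact Or.inl (card_mk_of_ne_zero d hd c hc hc0)
  · rintro (rfl | ⟨d, hd, hd0, rfl⟩)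
    · obtain ⟨c, hc, hc0⟩ := E.bot_or_exists_ne_zero.resolve_left hE
      exact ⟨0, c, ⟨D.zero_mem, hc⟩, fun _ => hc0, card_mk_of_ne_zero 0 D.zero_mem c hc hc0⟩
    · exact ⟨d, 0, ⟨hd, E.zero_mem⟩, fun h => absurd h hd0, card_mk_zero d⟩

end AddAut

abbrev AdjoinRadical {K : Type*} [Field K] (u : Kˣ) (M : ℕ) : Type _ :=
  AdjoinRoot (X ^ M - C (u : K))

namespace AdjoinRadical

variable {K : Type*} [Field K] (u : Kˣ) (M : ℕ) [NeZero M]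

instance : Nontrivial (AdjoinRadical u M) :=
  AdjoinRoot.nontrivial _ <| by
    rw [degree_X_pow_sub_C (Nat.pos_of_ne_zero (NeZero.ne M))]
    exact_mod_cast NeZero.ne M

instance [Finite K] : Finite (AdjoinRadical u M) :=
  have := (monic_X_pow_sub_C (u : K) (NeZero.ne M)).finite_adjoinRoot
  Module.finite_of_finite K

theorem isUnit_root : IsUnit (AdjoinRoot.root (X ^ M - C (u : K))) :=
  (isUnit_pow_iff (NeZero.ne M)).mp (root_X_pow_sub_C_pow M (u : K) ▸ u.isUnit.map _)

noncomputable def rootUnit : (AdjoinRadical u M)ˣ :=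
  (isUnit_root u M).unit

noncomputable def rootShift : AddAut (AdjoinRadical u M) :=
  Multiplicative.toAdd (AddAut.mulLeft (rootUnit u M))

noncomputable def scalarLine : AddSubgroup (AdjoinRadical u M) :=
  (algebraMap K (AdjoinRadical u M)).range.toAddSubgroup

variable {u M}

theorem val_rootUnit_zpow_mul (j : ℤ) :
    ((rootUnit u M ^ ((M : ℤ) * j) : (AdjoinRadical u M)ˣ) : AdjoinRadical u M) =
      algebraMap K _ ((u ^ j : Kˣ) : K) := by
  have hpow : rootUnit u M ^ M = Units.map (algebraMap K (AdjoinRadical u M)).toMonoidHom u :=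
    Units.ext (root_X_pow_sub_C_pow M (u : K))
  rw [zpow_mul, zpow_natCast, hpow, ← map_zpow, Units.coe_map]
  rfl

theorem rootUnit_zpow_mem_range_iff (k : ℤ) :
    ((rootUnit u M ^ k : (AdjoinRadical u M)ˣ) : AdjoinRadical u M) ∈
      (algebraMap K (AdjoinRadical u M)).range ↔ (M : ℤ) ∣ k := by
  refine ⟨fun hmem => ?_, fun ⟨j, hj⟩ => ⟨_, by rw [hj, val_rootUnit_zpow_mul]⟩⟩
  obtain ⟨q, r, hrM, hk⟩ : ∃ (q : ℤ) (r : ℕ), r < M ∧ k = M * q + r :=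
    have hM : (0 : ℤ) < M := by exact_mod_cast Nat.pos_of_ne_zero (NeZero.ne M)
    ⟨k / M, (k % M).toNat, by have := Int.emod_lt_of_pos k hM; omega,
      by rw [Int.toNat_of_nonneg (Int.emod_nonneg k hM.ne'), Int.mul_ediv_add_emod]⟩
  have hroot : AdjoinRoot.root (X ^ M - C (u : K)) ^ r =
      algebraMap K _ ((u ^ (-q) : Kˣ) : K) *
        ((rootUnit u M ^ k : (AdjoinRadical u M)ˣ) : AdjoinRadical u M) := by
    rw [← val_rootUnit_zpow_mul, ← Units.val_mul, ← zpow_add,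
      show (M : ℤ) * -q + k = r by rw [hk]; ring, zpow_natCast, Units.val_pow_eq_pow_val]
    rfl
  obtain rfl : r = 0 := by
    by_contra hr0
    refine AdjoinRoot.root_pow_notMem_range_algebraMap (monic_X_pow_sub_C (u : K) (NeZero.ne M))
      hr0 (by rwa [natDegree_X_pow_sub_C]) ?_
    rw [hroot]
    exact RingHom.mem_range.mp (Subring.mul_mem _ ⟨_, rfl⟩ hmem)
  exact ⟨q, by simpa using hk⟩

theorem zsmul_rootShift_apply (k : ℤ) (c : AdjoinRadical u M) :
    (k • rootShift u M) c = ((rootUnit u M ^ k : (AdjoinRadical u M)ˣ) : AdjoinRadical u M) * c :=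
  AddAut.zsmul_mulLeft_apply _ k c

theorem dvd_of_zsmul_rootShift_mem {c : AdjoinRadical u M} (hc : c ∈ scalarLine u M) (hc0 : c ≠ 0)
    {k : ℤ} (hk : (k • rootShift u M) c ∈ scalarLine u M) : (M : ℤ) ∣ k := by
  obtain ⟨c, rfl⟩ := hc
  refine (rootUnit_zpow_mem_range_iff (u := u) k).mp ?_
  have := Subring.mul_mem _ hk ⟨c⁻¹, rfl⟩
  rwa [zsmul_rootShift_apply, mul_assoc, ← map_mul,
    mul_inv_cancel₀ (fun h => hc0 (by rw [h, map_zero])), map_one, mul_one] at this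

theorem orbitTrace_rootShift {c : K} (hc : c ≠ 0) :
    (rootShift u M).orbitTrace (scalarLine u M) (algebraMap K _ c) =
      (fun w : Kˣ => algebraMap K (AdjoinRadical u M) (w * c)) '' Subgroup.zpowers u := by
  have hc' : algebraMap K (AdjoinRadical u M) c ≠ 0 := by simpa using hc
  ext y
  simp only [AddAut.orbitTrace, Set.mem_inter_iff, Set.mem_range, SetLike.mem_coe,
    Subgroup.coe_zpowers, Set.mem_image, exists_exists_eq_and]
  constructor
  · rintro ⟨⟨k, rfl⟩, hk⟩
    obtain ⟨j, rfl⟩ := dvd_of_zsmul_rootShift_mem ⟨c, rfl⟩ hc' hk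
    exact ⟨j, by rw [zsmul_rootShift_apply, map_mul, val_rootUnit_zpow_mul]⟩
  · rintro ⟨j, rfl⟩
    exact ⟨⟨M * j, by rw [zsmul_rootShift_apply, map_mul, val_rootUnit_zpow_mul]⟩, ⟨_, rfl⟩⟩

theorem ncard_orbitTrace_rootShift {c : AdjoinRadical u M} (hc : c ∈ scalarLine u M)
    (hc0 : c ≠ 0) : ((rootShift u M).orbitTrace (scalarLine u M) c).ncard = orderOf u := by
  obtain ⟨c, rfl⟩ := hc
  have hc0 : c ≠ 0 := by simpa using hc0
  have hinj : Function.Injective fun w : Kˣ => algebraMap K (AdjoinRadical u M) (w * c) :=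
    (algebraMap K _).injective.comp ((mul_left_injective₀ hc0).comp Units.val_injective)
  rw [orbitTrace_rootShift hc0, Set.ncard_image_of_injective _ hinj, ← Nat.card_coe_set_eq,
    SetLike.coe_sort_coe, Nat.card_zpowers]

theorem scalarLine_ne_bot : scalarLine u M ≠ ⊥ := fun h =>
  one_ne_zero <| AddSubgroup.mem_bot.mp (h ▸ ⟨1, map_one _⟩ : (1 : AdjoinRadical u M) ∈ _)

end AdjoinRadical

open AdjoinRadical in
theorem AlgLemmaWitness.nonempty_insert {P : Finset ℕ} (W : AlgLemmaWitness P) {n : ℕ}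
    (hn : 0 < n) : Nonempty (AlgLemmaWitness (insert n P)) := by
  obtain ⟨p, hp, -, hpn⟩ := Nat.exists_prime_gt_modEq_one 0 hn.ne'
  have : Fact p.Prime := ⟨hp⟩
  obtain ⟨u, hu⟩ : ∃ u : (ZMod p)ˣ, orderOf u = n := IsCyclic.exists_orderOf_eq_of_dvd <| by
    rw [Nat.card_eq_fintype_card, ZMod.card_units]
    exact (Nat.modEq_iff_dvd' hp.one_lt.le).mp hpn.symm
  have : NeZero (addOrderOf W.θ) := ⟨(addOrderOf_pos W.θ).ne'⟩
  have hW : W.θ.traceCards W.D = P := W.spec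
  refine ⟨{ B := W.B × AdjoinRadical u (addOrderOf W.θ)
            fin := Fintype.ofFinite _
            D := W.D.prod (scalarLine u _)
            θ := W.θ.prodCongr (rootShift u _)
            spec := ?_ }⟩
  change AddAut.traceCards _ _ = _
  rw [AddAut.traceCards_prodCongr (addOrderOf_nsmul_eq_zero W.θ) scalarLine_ne_bot
    (fun c hc hc0 k hk => dvd_of_zsmul_rootShift_mem hc hc0 hk)
    (fun c hc hc0 => (ncard_orbitTrace_rootShift hc hc0).trans hu), hW, Finset.coe_insert]

/-- For every finite set `P` of positive integers there exist a finite
abelian group `B`, a subgroup `D ≤ B` and an automorphism `θ` of `B`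
realizing `P` as the set of orbit-intersection cardinalities. -/
theorem exists_algLemmaWitness (P : Finset ℕ) (hP : ∀ n ∈ P, 0 < n) :
    Nonempty (AlgLemmaWitness P) := by
  induction P using Finset.induction_on with
  | empty => exact ⟨{ B := Unit, D := ⊥, θ := 0, spec := by simp }⟩
  | insert n P _ ih =>
    obtain ⟨W⟩ := ih fun m hm => hP m (Finset.mem_insert_of_mem hm)
    exact W.nonempty_insert (hP n (Finset.mem_insert_self n P))
end

section
/- Let V be a unitary operator on a Hilbert space H and suppose for some δ > 0 and a sequence n_t → ∞ that V^{n_t} converges to δ(I + V*) in the weak operator topology. Then for every vector v and every ε > 0, |⟨V^{n_t} v, v⟩| converges to δ|⟨v,v⟩ + ⟨V* v, v⟩|; in particular if moreover ‖v‖ = 1 and V v = λ v with |λ| = 1, then |1 + λ̄| = 1/δ · limit, forcing δ(1 + |λ̄|) ≥ 1, i.e., 2δ ≥ 1 whenever V has an eigenvector. Hence if δ < 1/2, V has no eigenvectors (continuous spectrum). -/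
open Filter
open scoped Topology

/-! On an eigenvector `v` with `|λ| = 1` the sequence `|⟨V^{n_t} v, v⟩|` is constantly `‖v‖²`,
while `⟨V* v, v⟩ = ⟨v, V v⟩ = λ ‖v‖²`. Comparing with the weak limit gives
`‖v‖² = δ |1 + λ| ‖v‖² ≤ 2δ ‖v‖²`, which is impossible for `δ < 1/2`. -/

theorem ContinuousLinearMap.pow_apply_of_apply_eq_smul {R M : Type*} [CommSemiring R]
    [AddCommMonoid M] [Module R M] [TopologicalSpace M] {V : M →L[R] M} {lam : R} {v : M}
    (hv : V v = lam • v) (k : ℕ) : (V ^ k) v = lam ^ k • v := by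
  induction k with
  | zero => simp
  | succ k ih => rw [pow_succ, mul_apply_eq_comp, hv, map_smul, ih, smul_smul, pow_succ']

section InnerProductSpace

variable {𝕜 E : Type*} [RCLike 𝕜] [NormedAddCommGroup E] [InnerProductSpace 𝕜 E]
  {V : E →L[𝕜] E} {lam : 𝕜} {v : E}

theorem norm_inner_pow_apply_self_of_apply_eq_smul (hv : V v = lam • v) (k : ℕ) :
    ‖(inner 𝕜 ((V ^ k) v) v : 𝕜)‖ = ‖lam‖ ^ k * ‖v‖ ^ 2 := by
  rw [V.pow_apply_of_apply_eq_smul hv, inner_smul_left, norm_mul, RCLike.norm_conj, norm_pow,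
    inner_self_eq_norm_sq_to_K, norm_pow, RCLike.norm_ofReal, abs_norm]

theorem inner_star_apply_self_of_apply_eq_smul [CompleteSpace E] (hv : V v = lam • v) :
    (inner 𝕜 ((star V) v) v : 𝕜) = lam * inner 𝕜 v v := by
  rw [ContinuousLinearMap.star_eq_adjoint, ContinuousLinearMap.adjoint_inner_left, hv,
    inner_smul_right]

end InnerProductSpace

theorem weak_limit_no_eigenvectors_general
    {H : Type*} [NormedAddCommGroup H] [InnerProductSpace ℂ H]
    [CompleteSpace H]
    (V : H →L[ℂ] H)
    (δ : ℝ) (hδ : 0 < δ)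
    (n : ℕ → ℕ)
    (hlim : ∀ u w : H, Tendsto (fun t => (inner ℂ ((V ^ n t) u) w : ℂ)) atTop
      (𝓝 ((δ : ℂ) * ((inner ℂ u w : ℂ) + (inner ℂ ((star V) u) w : ℂ))))) :
    (∀ v : H, Tendsto (fun t => ‖(inner ℂ ((V ^ n t) v) v : ℂ)‖) atTop
      (𝓝 (δ * ‖(inner ℂ v v : ℂ) + (inner ℂ ((star V) v) v : ℂ)‖))) ∧
    (δ < 1 / 2 → ∀ (v : H) (lam : ℂ), v ≠ 0 → ‖lam‖ = 1 →
      V v = lam • v → False) := by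
  have hnorm : ∀ v : H, Tendsto (fun t => ‖(inner ℂ ((V ^ n t) v) v : ℂ)‖) atTop
      (𝓝 (δ * ‖(inner ℂ v v : ℂ) + (inner ℂ ((star V) v) v : ℂ)‖)) := fun v => by
    simpa only [norm_mul, Complex.norm_real, Real.norm_of_nonneg hδ.le] using (hlim v v).norm
  refine ⟨hnorm, fun hδ2 v lam hv hlam hev => ?_⟩
  have hconst : ∀ t, ‖(inner ℂ ((V ^ n t) v) v : ℂ)‖ = ‖v‖ ^ 2 := fun t => by
    rw [norm_inner_pow_apply_self_of_apply_eq_smul hev, hlam, one_pow, one_mul]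
  have hval : ‖(inner ℂ v v : ℂ) + (inner ℂ ((star V) v) v : ℂ)‖ = ‖1 + lam‖ * ‖v‖ ^ 2 := by
    rw [inner_star_apply_self_of_apply_eq_smul hev, ← one_add_mul, norm_mul,
      inner_self_eq_norm_sq_to_K, norm_pow, RCLike.norm_ofReal, abs_norm]
  have heq : ‖v‖ ^ 2 = δ * (‖1 + lam‖ * ‖v‖ ^ 2) :=
    tendsto_nhds_unique (tendsto_const_nhds.congr fun t => (hconst t).symm) (hval ▸ hnorm v)
  have hsum : ‖1 + lam‖ ≤ 2 := by linarith [norm_add_le 1 lam, norm_one (α := ℂ)]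
  have hpos : 0 < ‖v‖ ^ 2 := by positivity
  nlinarith [mul_le_mul_of_nonneg_right hsum hpos.le]

/-- If a unitary `V` satisfies `V^{n_t} → δ (I + V*)` weakly with `δ > 0`,
then `|⟨V^{n_t} v, v⟩| → δ |⟨v,v⟩ + ⟨V* v, v⟩|` for every `v`; and if
moreover `δ < 1/2` then `V` has no eigenvectors. -/
theorem weak_limit_no_eigenvectors
    {H : Type*} [NormedAddCommGroup H] [InnerProductSpace ℂ H]
    [CompleteSpace H]
    (V : H →L[ℂ] H) (hV : V ∈ unitary (H →L[ℂ] H))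
    (δ : ℝ) (hδ : 0 < δ)
    (n : ℕ → ℕ) (hn : Tendsto n atTop atTop)
    (hlim : ∀ u w : H, Tendsto (fun t => (inner ℂ ((V ^ n t) u) w : ℂ)) atTop
      (𝓝 ((δ : ℂ) * ((inner ℂ u w : ℂ) + (inner ℂ ((star V) u) w : ℂ))))) :
    (∀ v : H, Tendsto (fun t => ‖(inner ℂ ((V ^ n t) v) v : ℂ)‖) atTop
      (𝓝 (δ * ‖(inner ℂ v v : ℂ) + (inner ℂ ((star V) v) v : ℂ)‖))) ∧
    (δ < 1 / 2 → ∀ (v : H) (lam : ℂ), v ≠ 0 → ‖lam‖ = 1 →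
      V v = lam • v → False) :=
  weak_limit_no_eigenvectors_general V δ hδ n hlim
end

section
/- Let U₁, U₂ be unitary operators on Hilbert spaces H₁, H₂ and suppose along a sequence (h_n), U₁^{h_n} → c₁·I weakly and U₂^{h_n} → c₂·I weakly, where c₁ ≠ c₂ are complex constants. Then the maximal spectral types of U₁ and U₂ are mutually singular; equivalently, there is no nonzero bounded operator W : H₁ → H₂ with W U₁ = U₂ W. -/
/-!
An intertwiner `W` carries weak convergence along: `⟪U₂^{h_n} W u, w⟫ = ⟪U₁^{h_n} u, W* w⟫`
tends to `c₁ ⟪W u, w⟫`, while by hypothesis it tends to `c₂ ⟪W u, w⟫`. As `c₁ ≠ c₂`, every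
`⟪W u, w⟫` vanishes, and `w = W u` gives `W u = 0`.
-/

open Filter
open scoped Topology

namespace ContinuousLinearMap

theorem comp_pow_eq_pow_comp {R M₁ M₂ : Type*} [Semiring R]
    [TopologicalSpace M₁] [AddCommMonoid M₁] [Module R M₁]
    [TopologicalSpace M₂] [AddCommMonoid M₂] [Module R M₂]
    {W : M₁ →L[R] M₂} {U₁ : M₁ →L[R] M₁} {U₂ : M₂ →L[R] M₂}
    (hW : W ∘L U₁ = U₂ ∘L W) (n : ℕ) : W ∘L (U₁ ^ n) = (U₂ ^ n) ∘L W := by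
  induction n with
  | zero => rw [pow_zero, pow_zero, one_def, one_def, comp_id, id_comp]
  | succ n ih => rw [pow_succ, pow_succ, mul_def, mul_def, ← comp_assoc, ih, comp_assoc, hW,
      comp_assoc]

theorem tendsto_inner_apply_of_tendsto_inner {𝕜 E F ι : Type*} [RCLike 𝕜]
    [NormedAddCommGroup E] [InnerProductSpace 𝕜 E] [CompleteSpace E]
    [NormedAddCommGroup F] [InnerProductSpace 𝕜 F]
    (W : E →L[𝕜] F) {l : Filter ι} {x : ι → E} {c : 𝕜} {x₀ : E}
    (hx : ∀ v, Tendsto (fun t => inner 𝕜 (x t) v) l (𝓝 (c * inner 𝕜 x₀ v))) (w : F) :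
    Tendsto (fun t => inner 𝕜 (W (x t)) w) l (𝓝 (c * inner 𝕜 (W x₀) w)) := by
  -- `v` is the adjoint `W† w`, obtained by Riesz representation on `E` alone.
  obtain ⟨v, hv⟩ : ∃ v, ∀ y, inner 𝕜 y v = inner 𝕜 (W y) w :=
    ⟨(InnerProductSpace.toDual 𝕜 E).symm ((innerSL 𝕜 w).comp W), fun y => by
      rw [← inner_conj_symm, InnerProductSpace.toDual_symm_apply, comp_apply,
        innerSL_apply_apply, inner_conj_symm]⟩
  simpa only [hv] using hx v

end ContinuousLinearMap

theorem no_intertwiner_of_distinct_weak_limits_general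
    {H₁ H₂ : Type*}
    [NormedAddCommGroup H₁] [InnerProductSpace ℂ H₁] [CompleteSpace H₁]
    [NormedAddCommGroup H₂] [InnerProductSpace ℂ H₂]
    (U₁ : H₁ →L[ℂ] H₁)
    (U₂ : H₂ →L[ℂ] H₂)
    (c₁ c₂ : ℂ) (hc : c₁ ≠ c₂)
    (h : ℕ → ℕ)
    (hlim₁ : ∀ u w : H₁, Tendsto (fun t => (inner ℂ ((U₁ ^ h t) u) w : ℂ))
      atTop (𝓝 (c₁ * (inner ℂ u w : ℂ))))
    (hlim₂ : ∀ u w : H₂, Tendsto (fun t => (inner ℂ ((U₂ ^ h t) u) w : ℂ))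
      atTop (𝓝 (c₂ * (inner ℂ u w : ℂ)))) :
    ∀ W : H₁ →L[ℂ] H₂, W ∘L U₁ = U₂ ∘L W → W = 0 := by
  intro W hW
  have hlim : ∀ u w, Tendsto (fun t => inner ℂ ((U₂ ^ h t) (W u)) w) atTop
      (𝓝 (c₁ * inner ℂ (W u) w)) := fun u w => by
    simpa only [← ContinuousLinearMap.comp_apply, ContinuousLinearMap.comp_pow_eq_pow_comp hW] using
      W.tendsto_inner_apply_of_tendsto_inner (hlim₁ u) w
  ext u
  have hlimits := tendsto_nhds_unique (hlim u (W u)) (hlim₂ (W u) (W u))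
  simpa [hc] using hlimits

/-- If `U₁^{h_n} → c₁ I` and `U₂^{h_n} → c₂ I` weakly along a common
sequence `h_n → ∞` with `c₁ ≠ c₂`, then there is no nonzero bounded
intertwining operator `W U₁ = U₂ W`; equivalently, the maximal spectral
types of `U₁` and `U₂` are mutually singular. -/
theorem no_intertwiner_of_distinct_weak_limits
    {H₁ H₂ : Type*}
    [NormedAddCommGroup H₁] [InnerProductSpace ℂ H₁] [CompleteSpace H₁]
    [NormedAddCommGroup H₂] [InnerProductSpace ℂ H₂] [CompleteSpace H₂]
    (U₁ : H₁ →L[ℂ] H₁) (hU₁ : U₁ ∈ unitary (H₁ →L[ℂ] H₁))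
    (U₂ : H₂ →L[ℂ] H₂) (hU₂ : U₂ ∈ unitary (H₂ →L[ℂ] H₂))
    (c₁ c₂ : ℂ) (hc : c₁ ≠ c₂)
    (h : ℕ → ℕ) (hh : Tendsto h atTop atTop)
    (hlim₁ : ∀ u w : H₁, Tendsto (fun t => (inner ℂ ((U₁ ^ h t) u) w : ℂ))
      atTop (𝓝 (c₁ * (inner ℂ u w : ℂ))))
    (hlim₂ : ∀ u w : H₂, Tendsto (fun t => (inner ℂ ((U₂ ^ h t) u) w : ℂ))
      atTop (𝓝 (c₂ * (inner ℂ u w : ℂ)))) :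
    ∀ W : H₁ →L[ℂ] H₂, W ∘L U₁ = U₂ ∘L W → W = 0 :=
  no_intertwiner_of_distinct_weak_limits_general U₁ U₂ c₁ c₂ hc h hlim₁ hlim₂
end
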